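/- For any 3×3 complex matrix A: |perm(A)|² − |det(A)|² = 2·Σ_{i,j=1}^{3} |A_{ji}|²·( |perm(A(¬j,¬i))|² − perm(M(¬j,¬i)) ), where M_{kl} = |A_{kl}|² and A(¬j,¬i), M(¬j,¬i) are the submatrices with row j and column i deleted. -/

import Mathlib

/-!
Write `perm A = E + O` and `det A = E - O`, where `E` and `O` are the sums over the even and the
odd permutations of `Fin 3`, so that `|perm A|² - |det A|² = 4 Re (E Ō)`. An even and an odd
permutation of three letters agree at exactly one place `j ↦ i`, so each of the nine products in
`E Ō` is `|A j i|²` times the cross term `b₀₀ b₁₁ conj (b₀₁ b₁₀)` of the minor `B` at `(j, i)`, or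
its conjugate; and `|perm B|² - perm M_B` is twice the real part of that cross term.
-/

namespace Matrix

variable {R : Type*} [CommSemiring R]

theorem permanent_fin_two (A : Matrix (Fin 2) (Fin 2) R) :
    A.permanent = A 0 0 * A 1 1 + A 0 1 * A 1 0 := by
  simp_rw [permanent, Finset.univ_perm_fin_succ, ← Finset.univ_product_univ, Finset.sum_map,
    Finset.sum_product]
  simp [Fin.sum_univ_succ, Fin.prod_univ_succ, Equiv.Perm.decomposeFin_symm_apply_succ, mul_comm]

theorem permanent_fin_three (A : Matrix (Fin 3) (Fin 3) R) :
    A.permanent =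
      A 0 0 * A 1 1 * A 2 2 + A 0 0 * A 1 2 * A 2 1
      + A 0 1 * A 1 0 * A 2 2 + A 0 1 * A 1 2 * A 2 0
      + A 0 2 * A 1 0 * A 2 1 + A 0 2 * A 1 1 * A 2 0 := by
  simp_rw [permanent, Finset.univ_perm_fin_succ, ← Finset.univ_product_univ, Finset.sum_map,
    Finset.sum_product]
  simp_rw [Finset.univ_perm_fin_succ, ← Finset.univ_product_univ, Finset.sum_map,
    Finset.sum_product]
  simp only [Finset.univ_unique, Equiv.Perm.default_eq, Function.Embedding.coeFn_mk,
    Fin.sum_univ_succ, Fin.prod_univ_succ, Equiv.Perm.decomposeFin_symm_apply_zero,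
    Equiv.Perm.decomposeFin_symm_apply_succ, Equiv.swap_apply_def, Fin.succ_ne_zero, ↓reduceIte,
    Fin.succ_zero_eq_one, Fin.default_eq_zero, Finset.prod_singleton, Fin.succ_one_eq_two,
    Finset.sum_singleton, Equiv.Perm.coe_one, id_eq, one_ne_zero, Fin.reduceEq]
  ring

end Matrix

open Matrix Complex ComplexConjugate

theorem Complex.normSq_add_sub_normSq_sub (z w : ℂ) :
    normSq (z + w) - normSq (z - w) = 4 * (z * conj w).re := by
  rw [normSq_add, normSq_sub]
  ring

theorem normSq_permanent_sub_permanent_map_normSq (B : Matrix (Fin 2) (Fin 2) ℂ) :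
    normSq B.permanent - (B.map normSq).permanent =
      2 * (B 0 0 * B 1 1 * conj (B 0 1 * B 1 0)).re := by
  simp only [permanent_fin_two, map_apply, normSq_add, normSq_mul]
  ring

theorem normSq_permanent_sub_normSq_det_fin_three (A : Matrix (Fin 3) (Fin 3) ℂ) :
    normSq A.permanent - normSq A.det =
      4 * ((A 0 0 * A 1 1 * A 2 2 + A 0 1 * A 1 2 * A 2 0 + A 0 2 * A 1 0 * A 2 1) *
        conj (A 0 0 * A 1 2 * A 2 1 + A 0 1 * A 1 0 * A 2 2 + A 0 2 * A 1 1 * A 2 0)).re := by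
  rw [← Complex.normSq_add_sub_normSq_sub, permanent_fin_three, det_fin_three]
  congr 2 <;> ring

theorem re_mul_conj_eq_sum_normSq_mul_minor (A : Matrix (Fin 3) (Fin 3) ℂ) :
    ((A 0 0 * A 1 1 * A 2 2 + A 0 1 * A 1 2 * A 2 0 + A 0 2 * A 1 0 * A 2 1) *
      conj (A 0 0 * A 1 2 * A 2 1 + A 0 1 * A 1 0 * A 2 2 + A 0 2 * A 1 1 * A 2 0)).re =
      ∑ i : Fin 3, ∑ j : Fin 3, normSq (A j i) *
        (A (j.succAbove 0) (i.succAbove 0) * A (j.succAbove 1) (i.succAbove 1) *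
          conj (A (j.succAbove 0) (i.succAbove 1) * A (j.succAbove 1) (i.succAbove 0))).re := by
  simp only [Fin.sum_univ_three, Fin.succAbove, Fin.castSucc, Fin.succ]
  apply ofReal_injective
  push_cast [re_eq_add_conj, ← mul_conj, map_mul, map_add, conj_conj]
  ring

theorem stmt_13 (A : Matrix (Fin 3) (Fin 3) ℂ)
    (M : Matrix (Fin 3) (Fin 3) ℝ) (hM : ∀ k l, M k l = Complex.normSq (A k l)) :
    Complex.normSq A.permanent - Complex.normSq A.det =
      2 * ∑ i : Fin 3, ∑ j : Fin 3,
        Complex.normSq (A j i) *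
          (Complex.normSq (A.submatrix j.succAbove i.succAbove).permanent -
            (M.submatrix j.succAbove i.succAbove).permanent) := by
  obtain rfl : M = A.map normSq := Matrix.ext hM
  simp only [submatrix_map, normSq_permanent_sub_permanent_map_normSq, submatrix_apply,
    normSq_permanent_sub_normSq_det_fin_three, re_mul_conj_eq_sum_normSq_mul_minor, Finset.mul_sum]
  ring_nf
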